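/- (Fuchs–van de Graaf inequality) For density matrices σ, ρ, the fidelity F(ρ,σ) = tr(|ρ^{1/2}σ^{1/2}|) and the trace distance satisfy 1 − (1/2)‖ρ−σ‖₁ ≤ F(ρ,σ) ≤ √(1 − (1/4)‖ρ−σ‖₁²), where ‖x‖₁ = tr(|x|). -/

import Mathlib

open scoped Matrix ComplexOrder

/-- The positive square root of a positive semidefinite matrix (junk value `0` otherwise). -/
noncomputable def matSqrt {d : ℕ} (x : Matrix (Fin d) (Fin d) ℂ) : Matrix (Fin d) (Fin d) ℂ :=
  @dite _ x.PosSemidef (Classical.propDecidable _) (fun h => (h.1.eigenvectorUnitary : Matrix (Fin d) (Fin d) ℂ) *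
    Matrix.diagonal ((↑) ∘ Real.sqrt ∘ h.1.eigenvalues) *
    (star h.1.eigenvectorUnitary : Matrix (Fin d) (Fin d) ℂ)) (fun _ => 0)

/-- The absolute value `|x| = (xᴴx)^{1/2}` of a matrix. -/
noncomputable def matAbs {d : ℕ} (x : Matrix (Fin d) (Fin d) ℂ) : Matrix (Fin d) (Fin d) ℂ :=
  matSqrt (xᴴ * x)

/-- Fidelity `F(σ,ρ) = tr |σ^{1/2} ρ^{1/2}|`. -/
noncomputable def fid {d : ℕ} (σ ρ : Matrix (Fin d) (Fin d) ℂ) : ℝ :=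
  (matAbs (matSqrt σ * matSqrt ρ)).trace.re

/-- Bures distance `d_B(σ,ρ) = √(1 - F(σ,ρ))`. -/
noncomputable def dB {d : ℕ} (σ ρ : Matrix (Fin d) (Fin d) ℂ) : ℝ :=
  Real.sqrt (1 - fid σ ρ)

/-!
Write `a = √ρ`, `b = √σ` and `F = tr |a b|`, so that `F ≥ Re tr (a b)`.

For the lower bound, `tr (a - b)² = 2 - 2 Re tr (a b)`, and the Powers–Størmer inequality
`tr (a - b)² ≤ ‖a² - b²‖₁` holds for any positive `a`, `b`: in an eigenbasis of `a - b`, with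
eigenvalues `μᵢ`, the diagonal of `a² - b²` is `μᵢ (aᵢᵢ + bᵢᵢ)` and `|μᵢ| = |aᵢᵢ - bᵢᵢ| ≤ aᵢᵢ + bᵢᵢ`.

For the upper bound, polar decomposition gives a unitary `W` with `tr (W a b) = F`; then `c = b W`
satisfies `c cᴴ = σ` and `Re tr (c a) = F`. From
`2 (a aᴴ - c cᴴ) = (a - c)(a + c)ᴴ + (a + c)(a - c)ᴴ`, the variational formula
`‖x‖₁ = max_U Re tr (U x)` and Cauchy–Schwarz for `⟪x, y⟫ = tr (y xᴴ)` give
`‖ρ - σ‖₁² ≤ ‖a - c‖₂² ‖a + c‖₂² = (2 - 2F)(2 + 2F)`.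
-/

open Matrix

namespace Matrix

section Trace

variable {n : Type*} [Fintype n]

theorem re_trace_mul_conjTranspose_self_nonneg (X : Matrix n n ℂ) : 0 ≤ (X * Xᴴ).trace.re :=
  (Complex.nonneg_iff.mp (posSemidef_self_mul_conjTranspose X).trace_nonneg).1

theorem re_trace_add_mul_conjTranspose_add (X Y : Matrix n n ℂ) :
    ((X + Y) * (X + Y)ᴴ).trace.re =
      (X * Xᴴ).trace.re + (Y * Yᴴ).trace.re + 2 * (Y * Xᴴ).trace.re := by
  have h : (X * Yᴴ).trace = star (Y * Xᴴ).trace := by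
    rw [← trace_conjTranspose, conjTranspose_mul, conjTranspose_conjTranspose]
  simp only [conjTranspose_add, add_mul, mul_add, trace_add, Complex.add_re, h, Complex.star_def,
    Complex.conj_re]
  ring

theorem re_trace_sub_mul_conjTranspose_sub (X Y : Matrix n n ℂ) :
    ((X - Y) * (X - Y)ᴴ).trace.re =
      (X * Xᴴ).trace.re + (Y * Yᴴ).trace.re - 2 * (Y * Xᴴ).trace.re := by
  simpa [sub_eq_add_neg, mul_neg, neg_mul] using re_trace_add_mul_conjTranspose_add X (-Y)

variable [DecidableEq n]

theorem re_trace_mul_conjTranspose_le (X Y : Matrix n n ℂ) :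
    (X * Yᴴ).trace.re ≤ √(X * Xᴴ).trace.re * √(Y * Yᴴ).trace.re := by
  -- The inner product Mathlib attaches to the positive matrix `1` is `⟪A, B⟫ = tr (B Aᴴ)`.
  let := toMatrixSeminormedAddCommGroup (1 : Matrix n n ℂ) PosSemidef.one
  let := toMatrixInnerProductSpace (1 : Matrix n n ℂ) PosSemidef.one
  have hinner (A B : Matrix n n ℂ) : inner ℂ A B = (B * Aᴴ).trace := by
    conv_rhs => rw [← Matrix.mul_one B]
    rfl
  have h := re_inner_le_norm (𝕜 := ℂ) Y X
  rw [norm_eq_sqrt_re_inner (𝕜 := ℂ), norm_eq_sqrt_re_inner (𝕜 := ℂ), mul_comm] at h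
  simpa only [hinner, RCLike.re_to_complex] using h

open scoped MatrixOrder in
theorem PosSemidef.re_trace_unitary_mul_le {P W : Matrix n n ℂ} (hP : P.PosSemidef)
    (hW : W ∈ unitaryGroup n ℂ) : (W * P).trace.re ≤ P.trace.re := by
  obtain ⟨B, rfl⟩ := CStarAlgebra.nonneg_iff_eq_star_mul_self.mp hP.nonneg
  have hWW : W * Wᴴ = 1 := Unitary.mul_star_self_of_mem hW
  calc (W * (star B * B)).trace.re = (B * W * Bᴴ).trace.re := by
        rw [star_eq_conjTranspose, ← Matrix.mul_assoc, trace_mul_comm, Matrix.mul_assoc]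
    _ ≤ √(B * W * (B * W)ᴴ).trace.re * √(B * Bᴴ).trace.re :=
        re_trace_mul_conjTranspose_le (B * W) B
    _ = (star B * B).trace.re := by
        rw [conjTranspose_mul, Matrix.mul_assoc, ← Matrix.mul_assoc W, hWW, Matrix.one_mul,
          Real.mul_self_sqrt (re_trace_mul_conjTranspose_self_nonneg B), star_eq_conjTranspose,
          trace_mul_comm]

theorem IsHermitian.exists_unitary_star_mul_mul_eq_diagonal {H : Matrix n n ℂ}
    (hH : H.IsHermitian) :
    ∃ V ∈ unitaryGroup n ℂ, ∃ μ : n → ℝ, star V * H * V = diagonal (fun i => (μ i : ℂ)) :=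
  ⟨_, hH.eigenvectorUnitary.2, hH.eigenvalues, by
    simpa [Function.comp_def] using hH.conjStarAlgAut_star_eigenvectorUnitary⟩

theorem exists_unitary_re_trace_sub_mul_sub_le_of_sub_eq_diagonal {a b : Matrix n n ℂ}
    (ha : a.PosSemidef) (hb : b.PosSemidef) {μ : n → ℝ}
    (hab : a - b = diagonal fun i => (μ i : ℂ)) :
    ∃ W ∈ unitaryGroup n ℂ, ((a - b) * (a - b)).trace.re ≤ (W * (a * a - b * b)).trace.re := by
  let ε : n → ℝ := fun i => if 0 ≤ μ i then 1 else -1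
  have hε (i : n) : ε i * ε i = 1 := by by_cases h : 0 ≤ μ i <;> simp [ε, h]
  refine ⟨diagonal fun i => (ε i : ℂ), ?_, ?_⟩
  · rw [mem_unitaryGroup_iff', star_eq_conjTranspose, diagonal_conjTranspose,
      diagonal_mul_diagonal, ← diagonal_one]
    congr 1
    funext i
    simp [← Complex.ofReal_mul, hε]
  have hsq : a * a - b * b = (a - b) * a + b * (a - b) := by noncomm_ring
  rw [hsq, hab, diagonal_mul_diagonal, trace_diagonal, trace, Complex.re_sum, Complex.re_sum]
  refine Finset.sum_le_sum fun i _ => ?_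
  have hμ : μ i = (a i i).re - (b i i).re := by
    simpa using congrArg Complex.re (congrFun₂ hab i i).symm
  have hα := (Complex.nonneg_iff.mp (ha.diag_nonneg (i := i))).1
  have hβ := (Complex.nonneg_iff.mp (hb.diag_nonneg (i := i))).1
  simp only [diag_apply, diagonal_mul, mul_diagonal, Matrix.add_apply, Complex.mul_re,
    Complex.add_re, Complex.ofReal_re, Complex.ofReal_im, zero_mul, mul_zero, sub_zero]
  by_cases h : 0 ≤ μ i <;> simp only [ε, h, if_true, if_false] <;> nlinarith

end Trace

section GramSchmidt

variable {n : Type*} [Fintype n] [DecidableEq n] [LinearOrder n] [LocallyFiniteOrderBot n]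

theorem exists_unitary_mul_diagonal_of_isDiag {M : Matrix n n ℂ} (hM : (Mᴴ * M).IsDiag) :
    ∃ C ∈ unitaryGroup n ℂ, ∃ s : n → ℝ, (∀ i, 0 ≤ s i) ∧
      M = C * diagonal (fun i => (s i : ℂ)) := by
  let col : n → EuclideanSpace ℂ n := fun i => WithLp.toLp 2 (fun k => M k i)
  have horth : Pairwise fun i j => inner ℂ (col i) (col j) = 0 := by
    intro i j hij
    simpa [col, PiLp.inner_apply, Matrix.mul_apply, mul_comm] using hM hij
  let b := InnerProductSpace.gramSchmidtOrthonormalBasis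
    (finrank_euclideanSpace (𝕜 := ℂ) (ι := n)) col
  refine ⟨(EuclideanSpace.basisFun n ℂ).toBasis.toMatrix b,
    (EuclideanSpace.basisFun n ℂ).toMatrix_orthonormalBasis_mem_unitary b,
    fun i => ‖col i‖, fun i => norm_nonneg _, ?_⟩
  ext k i
  rw [mul_diagonal, Module.Basis.toMatrix_apply]
  by_cases hi : col i = 0
  · simp [show M k i = 0 from congrFun (congrArg WithLp.ofLp hi) k, hi]
  · rw [InnerProductSpace.gramSchmidtOrthonormalBasis_apply_of_orthogonal _ horth hi]
    have hnorm : (‖col i‖ : ℂ) ≠ 0 := by simpa using hi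
    simp only [OrthonormalBasis.coe_toBasis_repr_apply, EuclideanSpace.basisFun_repr,
      PiLp.smul_apply, smul_eq_mul]
    field_simp
    rfl

end GramSchmidt

end Matrix

section MatAbs

variable {d : ℕ}

open scoped MatrixOrder in
theorem matSqrt_eq_sqrt {x : Matrix (Fin d) (Fin d) ℂ} (hx : x.PosSemidef) :
    matSqrt x = CFC.sqrt x := by
  rw [CFC.sqrt_eq_real_sqrt x hx.nonneg, cfcₙ_eq_cfc, hx.1.cfc_eq, IsHermitian.cfc,
    Unitary.conjStarAlgAut_apply]
  exact dif_pos hx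

open scoped MatrixOrder in
theorem Matrix.PosSemidef.matSqrt {x : Matrix (Fin d) (Fin d) ℂ} (hx : x.PosSemidef) :
    (matSqrt x).PosSemidef := by
  rw [matSqrt_eq_sqrt hx]
  exact (CFC.sqrt_nonneg x).posSemidef

open scoped MatrixOrder in
theorem matSqrt_mul_self {x : Matrix (Fin d) (Fin d) ℂ} (hx : x.PosSemidef) :
    matSqrt x * matSqrt x = x := by
  rw [matSqrt_eq_sqrt hx]
  exact CFC.sqrt_mul_sqrt_self x hx.nonneg

theorem posSemidef_matAbs (x : Matrix (Fin d) (Fin d) ℂ) : (matAbs x).PosSemidef :=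
  (posSemidef_conjTranspose_mul_self x).matSqrt

open scoped MatrixOrder in
theorem matAbs_eq_of_mul_self_eq {x P : Matrix (Fin d) (Fin d) ℂ} (hP : P.PosSemidef)
    (h : P * P = xᴴ * x) : matAbs x = P := by
  rw [matAbs, matSqrt_eq_sqrt (posSemidef_conjTranspose_mul_self x)]
  exact CFC.sqrt_unique h hP.nonneg

theorem matAbs_unitary_mul {U P : Matrix (Fin d) (Fin d) ℂ} (hU : U ∈ unitaryGroup (Fin d) ℂ)
    (hP : P.PosSemidef) : matAbs (U * P) = P := by
  refine matAbs_eq_of_mul_self_eq hP ?_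
  rw [conjTranspose_mul, hP.1.eq, Matrix.mul_assoc, ← Matrix.mul_assoc Uᴴ,
    ← star_eq_conjTranspose, Unitary.star_mul_self_of_mem hU, Matrix.one_mul]

theorem exists_unitary_mul_matAbs (A : Matrix (Fin d) (Fin d) ℂ) :
    ∃ U ∈ unitaryGroup (Fin d) ℂ, A = U * matAbs A := by
  obtain ⟨V, hV, μ, hμ⟩ :=
    (posSemidef_conjTranspose_mul_self A).isHermitian.exists_unitary_star_mul_mul_eq_diagonal
  have hAV : ((A * V)ᴴ * (A * V)).IsDiag := by
    rw [conjTranspose_mul, ← star_eq_conjTranspose, Matrix.mul_assoc, ← Matrix.mul_assoc Aᴴ,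
      ← Matrix.mul_assoc, hμ]
    exact isDiag_diagonal _
  obtain ⟨C, hC, s, hs, hCs⟩ := exists_unitary_mul_diagonal_of_isDiag hAV
  have hP : (V * diagonal (fun i => (s i : ℂ)) * star V).PosSemidef :=
    (PosSemidef.diagonal fun i => Complex.zero_le_real.mpr (hs i)).mul_mul_conjTranspose_same V
  have hA : A = (C * star V) * (V * diagonal (fun i => (s i : ℂ)) * star V) := by
    calc A = A * V * star V := by rw [Matrix.mul_assoc, Unitary.mul_star_self_of_mem hV, mul_one]
      _ = _ := by
        simp only [hCs, Matrix.mul_assoc]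
        rw [← Matrix.mul_assoc (star V) V, Unitary.star_mul_self_of_mem hV, Matrix.one_mul]
  have hU : C * star V ∈ unitaryGroup (Fin d) ℂ := mul_mem hC (Unitary.star_mem hV)
  refine ⟨C * star V, hU, ?_⟩
  conv_rhs => rw [hA, matAbs_unitary_mul hU hP]
  exact hA

theorem re_trace_unitary_mul_le_trace_matAbs {W : Matrix (Fin d) (Fin d) ℂ}
    (hW : W ∈ unitaryGroup (Fin d) ℂ) (A : Matrix (Fin d) (Fin d) ℂ) :
    (W * A).trace.re ≤ (matAbs A).trace.re := by
  obtain ⟨U, hU, hA⟩ := exists_unitary_mul_matAbs A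
  conv_lhs => rw [hA, ← Matrix.mul_assoc]
  exact (posSemidef_matAbs A).re_trace_unitary_mul_le (mul_mem hW hU)

theorem exists_unitary_trace_mul_eq_trace_matAbs (A : Matrix (Fin d) (Fin d) ℂ) :
    ∃ W ∈ unitaryGroup (Fin d) ℂ, (W * A).trace = (matAbs A).trace := by
  obtain ⟨U, hU, hA⟩ := exists_unitary_mul_matAbs A
  refine ⟨star U, Unitary.star_mem hU, ?_⟩
  conv_lhs => rw [hA, ← Matrix.mul_assoc, Unitary.star_mul_self_of_mem hU, Matrix.one_mul]

end MatAbs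

section FuchsVanDeGraaf

variable {d : ℕ}

theorem re_trace_sub_mul_sub_le_trace_matAbs {a b : Matrix (Fin d) (Fin d) ℂ}
    (ha : a.PosSemidef) (hb : b.PosSemidef) :
    ((a - b) * (a - b)).trace.re ≤ (matAbs (a * a - b * b)).trace.re := by
  obtain ⟨V, hV, μ, hμ⟩ := (ha.1.sub hb.1).exists_unitary_star_mul_mul_eq_diagonal
  let φ := Unitary.conjStarAlgAut ℂ (Matrix (Fin d) (Fin d) ℂ) (star ⟨V, hV⟩)
  have hφ (x : Matrix (Fin d) (Fin d) ℂ) : φ x = star V * x * V :=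
    Unitary.conjStarAlgAut_star_apply _ _
  have htrace (x : Matrix (Fin d) (Fin d) ℂ) : (φ x).trace = x.trace := by
    rw [hφ, trace_mul_cycle, Unitary.mul_star_self_of_mem hV, Matrix.one_mul]
  have hpsd {x : Matrix (Fin d) (Fin d) ℂ} (hx : x.PosSemidef) : (φ x).PosSemidef := by
    rw [hφ, star_eq_conjTranspose]
    exact hx.conjTranspose_mul_mul_same V
  obtain ⟨W, hW, hle⟩ := exists_unitary_re_trace_sub_mul_sub_le_of_sub_eq_diagonal
    (hpsd ha) (hpsd hb) (by rw [← map_sub, hφ, hμ])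
  simp only [← map_sub, ← map_mul, htrace] at hle
  calc ((a - b) * (a - b)).trace.re ≤ (W * φ (a * a - b * b)).trace.re := hle
    _ = (V * W * star V * (a * a - b * b)).trace.re := by
        conv_lhs => rw [hφ, ← Matrix.mul_assoc, trace_mul_comm]
        simp only [Matrix.mul_assoc]
    _ ≤ (matAbs (a * a - b * b)).trace.re :=
        re_trace_unitary_mul_le_trace_matAbs
          (mul_mem (mul_mem hV hW) (Unitary.star_mem hV)) _

theorem sq_trace_matAbs_sub_le (X Y : Matrix (Fin d) (Fin d) ℂ) :
    (matAbs (X * Xᴴ - Y * Yᴴ)).trace.re ^ 2 ≤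
      ((X - Y) * (X - Y)ᴴ).trace.re * ((X + Y) * (X + Y)ᴴ).trace.re := by
  obtain ⟨W, hW, hWtr⟩ := exists_unitary_trace_mul_eq_trace_matAbs (X * Xᴴ - Y * Yᴴ)
  have hW' : Wᴴ * W = 1 := Unitary.star_mul_self_of_mem hW
  have hnorm (Z : Matrix (Fin d) (Fin d) ℂ) : (W * Z * (W * Z)ᴴ).trace = (Z * Zᴴ).trace := by
    rw [conjTranspose_mul, Matrix.mul_assoc, trace_mul_comm]
    simp only [Matrix.mul_assoc, hW', Matrix.mul_one]
  have hsplit : (X - Y) * (X + Y)ᴴ + (X + Y) * (X - Y)ᴴ =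
      (X * Xᴴ - Y * Yᴴ) + (X * Xᴴ - Y * Yᴴ) := by
    simp only [conjTranspose_add, conjTranspose_sub]
    noncomm_ring
  have h1 := re_trace_mul_conjTranspose_le (W * (X - Y)) (X + Y)
  have h2 := re_trace_mul_conjTranspose_le (W * (X + Y)) (X - Y)
  rw [hnorm, Matrix.mul_assoc] at h1 h2
  have hsum : (W * ((X - Y) * (X + Y)ᴴ)).trace.re + (W * ((X + Y) * (X - Y)ᴴ)).trace.re =
      2 * (matAbs (X * Xᴴ - Y * Yᴴ)).trace.re := by
    rw [← Complex.add_re, ← trace_add, ← Matrix.mul_add, hsplit, Matrix.mul_add, trace_add,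
      Complex.add_re, hWtr]
    ring
  have hN : 0 ≤ (matAbs (X * Xᴴ - Y * Yᴴ)).trace.re :=
    (Complex.nonneg_iff.mp (posSemidef_matAbs _).trace_nonneg).1
  have hA := re_trace_mul_conjTranspose_self_nonneg (X - Y)
  have hB := re_trace_mul_conjTranspose_self_nonneg (X + Y)
  have hle : (matAbs (X * Xᴴ - Y * Yᴴ)).trace.re ≤
      √((X - Y) * (X - Y)ᴴ).trace.re * √((X + Y) * (X + Y)ᴴ).trace.re := by
    linarith [mul_comm √((X - Y) * (X - Y)ᴴ).trace.re √((X + Y) * (X + Y)ᴴ).trace.re]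
  calc (matAbs (X * Xᴴ - Y * Yᴴ)).trace.re ^ 2
      ≤ (√((X - Y) * (X - Y)ᴴ).trace.re * √((X + Y) * (X + Y)ᴴ).trace.re) ^ 2 :=
        pow_le_pow_left₀ hN hle 2
    _ = _ := by rw [mul_pow, Real.sq_sqrt hA, Real.sq_sqrt hB]

theorem one_sub_half_trace_matAbs_sub_le_fid {ρ σ : Matrix (Fin d) (Fin d) ℂ}
    (hρ : ρ.PosSemidef) (hσ : σ.PosSemidef) (hρ1 : ρ.trace = 1) (hσ1 : σ.trace = 1) :
    1 - 1 / 2 * (matAbs (ρ - σ)).trace.re ≤ fid ρ σ := by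
  set a := matSqrt ρ
  set b := matSqrt σ
  have hps := re_trace_sub_mul_sub_le_trace_matAbs hρ.matSqrt hσ.matSqrt
  rw [matSqrt_mul_self hρ, matSqrt_mul_self hσ] at hps
  have hexp : ((a - b) * (a - b)).trace.re = 2 - 2 * (a * b).trace.re := by
    have : (a - b) * (a - b) = a * a + b * b - (a * b + b * a) := by noncomm_ring
    rw [this, matSqrt_mul_self hρ, matSqrt_mul_self hσ, trace_sub, trace_add, trace_add,
      trace_mul_comm b, hρ1, hσ1]
    simp only [Complex.sub_re, Complex.add_re, Complex.one_re]
    ring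
  have hre : (a * b).trace.re ≤ fid ρ σ := by
    have h := re_trace_unitary_mul_le_trace_matAbs (one_mem _) (a * b)
    rw [Matrix.one_mul] at h
    exact h
  linarith

theorem fid_le_sqrt_one_sub_quarter_sq {ρ σ : Matrix (Fin d) (Fin d) ℂ}
    (hρ : ρ.PosSemidef) (hσ : σ.PosSemidef) (hρ1 : ρ.trace = 1) (hσ1 : σ.trace = 1) :
    fid ρ σ ≤ √(1 - 1 / 4 * (matAbs (ρ - σ)).trace.re ^ 2) := by
  set a := matSqrt ρ
  set b := matSqrt σ
  obtain ⟨W, hW, hWtr⟩ := exists_unitary_trace_mul_eq_trace_matAbs (a * b)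
  have haa : a * aᴴ = ρ := by rw [hρ.matSqrt.1.eq, matSqrt_mul_self hρ]
  have hcc : b * W * (b * W)ᴴ = σ := by
    rw [conjTranspose_mul, hσ.matSqrt.1.eq, Matrix.mul_assoc, ← Matrix.mul_assoc W,
      show W * Wᴴ = 1 from Unitary.mul_star_self_of_mem hW, Matrix.one_mul, matSqrt_mul_self hσ]
  have hca : (b * W * aᴴ).trace.re = fid ρ σ := by
    rw [hρ.matSqrt.1.eq, trace_mul_cycle, trace_mul_comm, hWtr]
    rfl
  have hsq := sq_trace_matAbs_sub_le a (b * W)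
  rw [re_trace_sub_mul_conjTranspose_sub, re_trace_add_mul_conjTranspose_add, haa, hcc, hca,
    hρ1, hσ1] at hsq
  simp only [Complex.one_re] at hsq
  apply Real.le_sqrt_of_sq_le
  linear_combination hsq / 4

end FuchsVanDeGraaf

/-- Fuchs–van de Graaf:
1 - (1/2)‖ρ-σ‖₁ ≤ F(ρ,σ) ≤ √(1 - (1/4)‖ρ-σ‖₁²). -/
theorem fuchs_van_de_graaf {d : ℕ} (ρ σ : Matrix (Fin d) (Fin d) ℂ)
    (hρ : ρ.PosSemidef) (hσ : σ.PosSemidef)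
    (hρ1 : ρ.trace = 1) (hσ1 : σ.trace = 1) :
    1 - (1 / 2) * (matAbs (ρ - σ)).trace.re ≤ fid ρ σ ∧
    fid ρ σ ≤ Real.sqrt (1 - (1 / 4) * ((matAbs (ρ - σ)).trace.re) ^ 2) :=
  ⟨one_sub_half_trace_matAbs_sub_le_fid hρ hσ hρ1 hσ1,
    fid_le_sqrt_one_sub_quarter_sq hρ hσ hρ1 hσ1⟩
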